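/- Let (fₙ) be a sequence of functions [0,1) → M with countable range and measurable point-preimages, which is Cauchy in the pseudometric d(f,g) = λ{t : f(t) ≠ g(t)}. Then there is a function f : [0,1) → M with countable range and measurable point-preimages such that d(fₙ, f) → 0. -/

import Mathlib

/-!
Pass to a subsequence `f ∘ φ` whose consecutive distances are at most `2⁻¹ ^ k`. Off the tail
union `⋃ j ≥ k, {f (φ j) ≠ f (φ (j + 1))}`, whose measure is a tail of a convergent series, the
subsequence is constant from `k` on; so it is eventually constant at every point, and its eventual
value `g` is the limit. The whole Cauchy sequence then converges to `g` by the triangle inequality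
for `d`.
-/

open MeasureTheory Filter
open scoped ENNReal Topology

section

variable {α M : Type*}

lemma measure_setOf_ne_le_add [MeasurableSpace α] (μ : Measure α) (p q r : α → M) :
    μ {t | p t ≠ r t} ≤ μ {t | p t ≠ q t} + μ {t | q t ≠ r t} := by
  refine (measure_mono fun t (hpr : p t ≠ r t) => ?_).trans (measure_union_le _ _)
  by_contra h
  simp only [Set.mem_union, Set.mem_ofPred_eq, not_or, not_not] at h
  exact hpr (h.1.trans h.2)

open Classical in
/-- An arbitrary point of `M` where the sequence is not eventually constant. -/
noncomputable def eventualValue [Nonempty M] (u : ℕ → α → M) (t : α) : M :=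
  if h : ∃ a, ∀ᶠ k in atTop, u k t = a then h.choose else Classical.arbitrary M

section eventualValue

variable [Nonempty M] {u : ℕ → α → M}

lemma eventualValue_eq {t : α} {a : M} (h : ∀ᶠ k in atTop, u k t = a) :
    eventualValue u t = a := by
  have hex : ∃ b, ∀ᶠ k in atTop, u k t = b := ⟨a, h⟩
  rw [eventualValue, dif_pos hex]
  obtain ⟨k, hk₁, hk₂⟩ := (hex.choose_spec.and h).exists
  exact hk₁.symm.trans hk₂

lemma measurableSet_preimage_eventualValue [Countable M] [MeasurableSpace α]
    (hu : ∀ k, ∀ a : M, MeasurableSet (u k ⁻¹' {a})) (a : M) :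
    MeasurableSet (eventualValue u ⁻¹' {a}) := by
  set A : M → Set α := fun b => {t | ∀ᶠ k in atTop, u k t = b}
  have hA : ∀ b, MeasurableSet (A b) := fun b => by
    convert MeasurableSet.measurableSet_liminf fun k => hu k b using 1
    ext t
    simp [A, mem_liminf_iff_eventually_mem]
  have hpre : eventualValue u ⁻¹' {a} =
      A a ∪ ((⋃ b, A b)ᶜ ∩ {_t | Classical.arbitrary M = a}) := by
    ext t
    by_cases hex : ∃ b, ∀ᶠ k in atTop, u k t = b
    · obtain ⟨b, hb⟩ := hex
      have hbA : t ∈ ⋃ b, A b := Set.mem_iUnion.2 ⟨b, hb⟩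
      simp only [Set.mem_preimage, Set.mem_singleton_iff, eventualValue_eq hb, Set.mem_union,
        Set.mem_inter_iff, hbA, not_true_eq_false, Set.mem_compl_iff, false_and, or_false]
      exact ⟨fun hba => hba ▸ hb, fun ha => (eventualValue_eq hb).symm.trans (eventualValue_eq ha)⟩
    · have hta : t ∉ A a := fun ha => hex ⟨a, ha⟩
      have htA : t ∉ ⋃ b, A b := fun h => hex (Set.mem_iUnion.1 h)
      simp only [Set.mem_preimage, Set.mem_singleton_iff, eventualValue, dif_neg hex,
        Set.mem_union, hta, Set.mem_inter_iff, Set.mem_compl_iff, htA, not_false_eq_true,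
        true_and, false_or, Set.mem_ofPred_eq]
  rw [hpre]
  exact (hA a).union ((MeasurableSet.iUnion hA).compl.inter (MeasurableSet.const _))

/-- Off the tail union of the sets where consecutive terms differ, `u` is constant from `k` on. -/
lemma measure_ne_eventualValue_le_tsum [MeasurableSpace α] (μ : Measure α) (k : ℕ) :
    μ {t | u k t ≠ eventualValue u t} ≤ ∑' j, μ {t | u (j + k) t ≠ u (j + k + 1) t} := by
  refine (measure_mono fun t (ht : u k t ≠ eventualValue u t) => ?_).trans
    (measure_iUnion_le _)
  by_contra hnot
  simp only [Set.mem_iUnion, Set.mem_ofPred_eq, not_exists, not_not] at hnot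
  have hconst : ∀ n ≥ k, u n t = u k t := by
    intro n hn
    induction n, hn using Nat.le_induction with
    | base => rfl
    | succ n hn ih =>
      obtain ⟨j, rfl⟩ := Nat.exists_eq_add_of_le' hn
      exact (hnot j).symm.trans ih
  exact ht (eventualValue_eq (eventually_atTop.2 ⟨k, hconst⟩)).symm

end eventualValue

theorem exists_tendsto_measure_ne_of_cauchy [Countable M] [Nonempty M] [MeasurableSpace α]
    (μ : Measure α) (f : ℕ → α → M) (hfib : ∀ n, ∀ a : M, MeasurableSet (f n ⁻¹' {a}))
    (hcauchy : ∀ ε > 0, ∃ N, ∀ m ≥ N, ∀ n ≥ N, μ {t | f m t ≠ f n t} < ε) :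
    ∃ g : α → M, (∀ a : M, MeasurableSet (g ⁻¹' {a})) ∧
      Tendsto (fun n => μ {t | f n t ≠ g t}) atTop (𝓝 0) := by
  have hclose : ∀ k : ℕ, ∀ᶠ n in atTop, ∀ m ≥ n, μ {t | f m t ≠ f n t} < 2⁻¹ ^ k := fun k => by
    obtain ⟨N, hN⟩ := hcauchy ((2⁻¹ : ℝ≥0∞) ^ k) (ENNReal.pow_pos (by simp) k)
    exact eventually_atTop.2 ⟨N, fun n hn m hm => hN m (hn.trans hm) n hn⟩
  obtain ⟨φ, hφ, hφclose⟩ := extraction_forall_of_eventually hclose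
  set u := fun k => f (φ k)
  set e := fun j => μ {t | u j t ≠ u (j + 1) t}
  have he : ∀ j, e j ≤ 2⁻¹ ^ j := fun j => by
    simpa only [e, ne_comm] using (hφclose j _ (hφ j.lt_succ_self).le).le
  have hsum : ∑' j, e j ≠ ∞ := by
    refine ne_top_of_le_ne_top ?_ (ENNReal.tsum_le_tsum he)
    simp [ENNReal.tsum_geometric]
  set B := fun k : ℕ => (2⁻¹ : ℝ≥0∞) ^ k + ∑' j, e (j + k)
  have hB : Tendsto B atTop (𝓝 0) := by
    simpa [B] using (ENNReal.tendsto_pow_atTop_nhds_zero_of_lt_one (by norm_num)).add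
      (ENNReal.tendsto_sum_nat_add e hsum)
  have hbound : ∀ k, ∀ n ≥ φ k, μ {t | f n t ≠ eventualValue u t} ≤ B k := fun k n hn =>
    (measure_setOf_ne_le_add μ _ (u k) _).trans
      (add_le_add (hφclose k n hn).le (measure_ne_eventualValue_le_tsum μ k))
  refine ⟨eventualValue u, measurableSet_preimage_eventualValue fun k => hfib (φ k), ?_⟩
  refine ENNReal.tendsto_nhds_zero.2 fun ε hε => ?_
  obtain ⟨k, hk⟩ := (ENNReal.tendsto_nhds_zero.1 hB ε hε).exists
  exact eventually_atTop.2 ⟨φ k, fun n hn => (hbound k n hn).trans hk⟩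

end

/-- Completeness of the space M^L of random elements: every Cauchy sequence in the
pseudometric d(f,g) = λ{t : f(t) ≠ g(t)} converges to some f ∈ M^L. -/
theorem ML_complete {M : Type*} [Countable M] [Nonempty M]
    (f : ℕ → ℝ → M)
    (hfib : ∀ n, ∀ a : M, MeasurableSet ((f n) ⁻¹' {a}))
    (hcauchy : ∀ ε : ℝ, 0 < ε → ∃ N, ∀ m ≥ N, ∀ n ≥ N,
      ((volume.restrict (Set.Ico (0:ℝ) 1)) {t | f m t ≠ f n t}).toReal < ε) :
    ∃ g : ℝ → M, (∀ a : M, MeasurableSet (g ⁻¹' {a})) ∧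
      Tendsto (fun n => ((volume.restrict (Set.Ico (0:ℝ) 1)) {t | f n t ≠ g t}).toReal)
        atTop (nhds 0) := by
  set μ := volume.restrict (Set.Ico (0:ℝ) 1)
  have : IsFiniteMeasure μ := isFiniteMeasure_restrict.2 (by simp)
  have hcauchy' : ∀ ε > 0, ∃ N, ∀ m ≥ N, ∀ n ≥ N, μ {t | f m t ≠ f n t} < ε := by
    intro ε hε
    by_cases hεtop : ε = ∞
    · exact ⟨0, fun m _ n _ => hεtop ▸ measure_lt_top μ _⟩
    obtain ⟨N, hN⟩ := hcauchy ε.toReal (ENNReal.toReal_pos hε.ne' hεtop)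
    exact ⟨N, fun m hm n hn => (ENNReal.toReal_lt_toReal (measure_ne_top μ _) hεtop).1
      (hN m hm n hn)⟩
  obtain ⟨g, hg, hlim⟩ := exists_tendsto_measure_ne_of_cauchy μ f hfib hcauchy'
  exact ⟨g, hg, by simpa [Function.comp_def] using (ENNReal.tendsto_toReal ENNReal.zero_ne_top).comp hlim⟩
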